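/- arXiv:2212.00701 — 2 statements merged into one kernel-verified Lean document; each statement's English description precedes it below -/
import Mathlib

section
/- If G is a ring of k ≥ 2 diamonds (so n(G) = 4k), then the loop zero forcing number and the zero forcing number of G are equal and both equal n(G)/4 + 2. -/
open SimpleGraph

variable {V : Type*}

/-- The set of vertices eventually colored blue when the vertices of `S` are initially
colored blue and the standard zero forcing color change rule is iterated. -/
inductive ZeroForce (G : SimpleGraph V) (S : Set V) : V → Prop
  | init (v : V) (h : v ∈ S) : ZeroForce G S v
  | force (v w : V) (hv : ZeroForce G S v) (hadj : G.Adj v w)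
      (h : ∀ u, G.Adj v u → u ≠ w → ZeroForce G S u) : ZeroForce G S w

/-- `S` is a zero forcing set of `G`. -/
def IsZeroForcingSet (G : SimpleGraph V) (S : Set V) : Prop :=
  ∀ v, ZeroForce G S v

/-- The zero forcing number `Z(G)`. -/
noncomputable def zeroForcingNumber (G : SimpleGraph V) : ℕ :=
  sInf {n | ∃ S : Set V, S.ncard = n ∧ IsZeroForcingSet G S}

/-- The set of vertices eventually colored blue when the vertices of `S` are initially
colored blue and the loop zero forcing color change rule is iterated:  a vertex `w`
becomes blue if it is the unique (possibly) white neighbor of a blue vertex, or if all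
of its neighbors are blue. -/
inductive LoopZeroForce (G : SimpleGraph V) (S : Set V) : V → Prop
  | init (v : V) (h : v ∈ S) : LoopZeroForce G S v
  | force (v w : V) (hv : LoopZeroForce G S v) (hadj : G.Adj v w)
      (h : ∀ u, G.Adj v u → u ≠ w → LoopZeroForce G S u) : LoopZeroForce G S w
  | loop (w : V) (h : ∀ u, G.Adj w u → LoopZeroForce G S u) : LoopZeroForce G S w

/-- `S` is a loop zero forcing set of `G`. -/
def IsLoopZeroForcingSet (G : SimpleGraph V) (S : Set V) : Prop :=
  ∀ v, LoopZeroForce G S v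

/-- The loop zero forcing number `Z_ℓ̇(G)`. -/
noncomputable def loopZeroForcingNumber (G : SimpleGraph V) : ℕ :=
  sInf {n | ∃ S : Set V, S.ncard = n ∧ IsLoopZeroForcingSet G S}

/-- The closed neighborhood `N[v]`. -/
def closedNbhd (G : SimpleGraph V) (v : V) : Set V := insert v (G.neighborSet v)

/-- A legal (closed neighborhood) sequence. -/
def IsLegalSeq (G : SimpleGraph V) (l : List V) : Prop :=
  l.Nodup ∧ ∀ (i : ℕ) (hi : i + 1 < l.length),
    ∃ u ∈ closedNbhd G (l.get ⟨i + 1, hi⟩), ∀ x ∈ l.take (i + 1), u ∉ closedNbhd G x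

/-- A dominating sequence: a legal sequence whose vertex set dominates `G`. -/
def IsDominatingSeq (G : SimpleGraph V) (l : List V) : Prop :=
  IsLegalSeq G l ∧ ∀ v : V, ∃ x ∈ l, v ∈ closedNbhd G x

/-- The Grundy domination number `γ_gr(G)`. -/
noncomputable def grundyDominationNumber (G : SimpleGraph V) : ℕ :=
  sSup {n | ∃ l : List V, IsDominatingSeq G l ∧ l.length = n}

/-- A `Z`-sequence: a legal sequence in which every vertex after the first footprints a
vertex distinct from itself. -/
def IsZSeq (G : SimpleGraph V) (l : List V) : Prop :=
  IsLegalSeq G l ∧ ∀ (i : ℕ) (hi : i + 1 < l.length),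
    ∃ u ∈ G.neighborSet (l.get ⟨i + 1, hi⟩), ∀ x ∈ l.take (i + 1), u ∉ closedNbhd G x

/-- The degree of a vertex, via `Set.ncard`. -/
noncomputable def ndeg (G : SimpleGraph V) (v : V) : ℕ := (G.neighborSet v).ncard

/-- The minimum degree `δ(G)`. -/
noncomputable def minDeg (G : SimpleGraph V) : ℕ := sInf {d | ∃ v : V, ndeg G v = d}

/-- The ring of `k` diamonds:  vertex `(i, 0)` is `uᵢ`, `(i, 1)` is `vᵢ`, `(i, 2)` is `wᵢ`
and `(i, 3)` is `yᵢ`; the `i`-th diamond is `K₄` on `{uᵢ, vᵢ, wᵢ, yᵢ}` minus the edge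
`uᵢyᵢ`, and `yᵢ` is joined to `u_{i+1}` (indices mod `k`). -/
def ringOfDiamonds (k : ℕ) : SimpleGraph (Fin k × Fin 4) :=
  SimpleGraph.fromRel (fun a b =>
    (a.1 = b.1 ∧ ¬(a.2 = 0 ∧ b.2 = 3) ∧ ¬(a.2 = 3 ∧ b.2 = 0)) ∨
    (b.1.val = (a.1.val + 1) % k ∧ a.2 = 3 ∧ b.2 = 0))

/-- `G` has no induced `K_{1,3}`. -/
def ClawFree (G : SimpleGraph V) : Prop :=
  ¬ ∃ v a b c : V, a ≠ b ∧ a ≠ c ∧ b ≠ c ∧ G.Adj v a ∧ G.Adj v b ∧ G.Adj v c ∧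
    ¬ G.Adj a b ∧ ¬ G.Adj a c ∧ ¬ G.Adj b c

/-- `G` is connected and remains connected after deleting any single edge. -/
def TwoEdgeConnected (G : SimpleGraph V) : Prop :=
  G.Connected ∧ ∀ e ∈ G.edgeSet, (G.deleteEdges {e}).Connected

/-- `G` is a maximal outerplanar graph:  its vertices can be arranged on a cycle
(the outer face) so that all edges of `G` are cycle edges or pairwise non-crossing
chords, and `G` has `2n - 3` edges (i.e. it is a triangulation of the polygon). -/
def IsMOP (G : SimpleGraph V) [Fintype V] : Prop :=
  3 ≤ Fintype.card V ∧
  ∃ f : Fin (Fintype.card V) ≃ V,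
    (∀ i j : Fin (Fintype.card V), j.val = (i.val + 1) % Fintype.card V → G.Adj (f i) (f j)) ∧
    (∀ a b c d : Fin (Fintype.card V), a.val < c.val → c.val < b.val → b.val < d.val →
      G.Adj (f a) (f b) → ¬ G.Adj (f c) (f d)) ∧
    G.edgeSet.ncard = 2 * Fintype.card V - 3

/-- A triangle of `G`: three mutually adjacent vertices. In a maximal outerplanar graph
these are exactly the inner (triangular) faces. -/
def IsTriangle (G : SimpleGraph V) (T : Finset V) : Prop :=
  T.card = 3 ∧ ∀ x ∈ T, ∀ y ∈ T, x ≠ y → G.Adj x y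

/-- In a maximal outerplanar graph, an edge lies on the outer face iff it lies in
exactly one triangle. -/
def IsBoundaryEdge (G : SimpleGraph V) (x y : V) : Prop :=
  G.Adj x y ∧ {T : Finset V | IsTriangle G T ∧ x ∈ T ∧ y ∈ T}.ncard = 1

/-- A separator triangle: an inner triangular face none of whose edges lies on the
outer face. -/
def IsSeparatorTriangle (G : SimpleGraph V) (T : Finset V) : Prop :=
  IsTriangle G T ∧ ∀ x ∈ T, ∀ y ∈ T, x ≠ y → ¬ IsBoundaryEdge G x y

/-- A serpentine graph: a maximal outerplanar graph with no separator triangle. -/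
def IsSerpentine (G : SimpleGraph V) [Fintype V] : Prop :=
  IsMOP G ∧ ¬ ∃ T : Finset V, IsSeparatorTriangle G T

/-- The weak planar dual of a maximal outerplanar graph: vertices are the triangles,
two triangles being adjacent when they share an edge. -/
def dualGraph (G : SimpleGraph V) [DecidableEq V] :
    SimpleGraph {T : Finset V // IsTriangle G T} where
  Adj A B := A ≠ B ∧ (A.1 ∩ B.1).card = 2
  symm := by
    constructor
    intro A B h
    exact ⟨h.1.symm, by rw [Finset.inter_comm]; exact h.2⟩
  loopless := by constructor; intro A h; exact h.1 rfl

/-- Degree in the weak planar dual. -/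
noncomputable def dualDeg (G : SimpleGraph V) [DecidableEq V]
    (A : {T : Finset V // IsTriangle G T}) : ℕ :=
  ((dualGraph G).neighborSet A).ncard

/-- A serpentine leaf: the set of triangles along the unique path in the weak dual from
a leaf of the dual to the nearest vertex of dual degree greater than 2. -/
def IsSerpentineLeaf (G : SimpleGraph V) [DecidableEq V]
    (L : Set {T : Finset V // IsTriangle G T}) : Prop :=
  ∃ (a b : {T : Finset V // IsTriangle G T}) (p : (dualGraph G).Walk a b),
    p.IsPath ∧ dualDeg G a = 1 ∧ 2 < dualDeg G b ∧
    (∀ c ∈ p.support, c ≠ a → c ≠ b → dualDeg G c = 2) ∧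
    L = {c | c ∈ p.support}

/-- A fan leaf: a serpentine leaf all of whose triangles share a common vertex lying on
a separator triangle. -/
def IsFanLeaf (G : SimpleGraph V) [DecidableEq V]
    (L : Set {T : Finset V // IsTriangle G T}) : Prop :=
  IsSerpentineLeaf G L ∧
    ∃ v : V, (∃ T : Finset V, IsSeparatorTriangle G T ∧ v ∈ T) ∧ ∀ A ∈ L, v ∈ A.1

/-- A serpentine path: a maximal nonempty set of triangles whose dual vertices have dual
degree 2 and form the unique path between two distinct dual vertices of degree at
least 3. -/
def IsSerpentinePath (G : SimpleGraph V) [DecidableEq V]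
    (P : Set {T : Finset V // IsTriangle G T}) : Prop :=
  ∃ (a b : {T : Finset V // IsTriangle G T}) (p : (dualGraph G).Walk a b),
    p.IsPath ∧ a ≠ b ∧ 3 ≤ dualDeg G a ∧ 3 ≤ dualDeg G b ∧
    (∀ c ∈ p.support, c ≠ a → c ≠ b → dualDeg G c = 2) ∧
    P = {c | c ∈ p.support ∧ c ≠ a ∧ c ≠ b} ∧ P.Nonempty

/-- A vertex lying on some separator triangle. -/
def SepVertex (G : SimpleGraph V) (v : V) : Prop :=
  ∃ T : Finset V, IsSeparatorTriangle G T ∧ v ∈ T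

/-- The subgraph `G_△` of `G` formed by the separator triangles. -/
def sepSubgraph (G : SimpleGraph V) : SimpleGraph {v : V // SepVertex G v} where
  Adj x y := G.Adj x.1 y.1 ∧ ∃ T : Finset V, IsSeparatorTriangle G T ∧ x.1 ∈ T ∧ y.1 ∈ T
  symm := by
    constructor
    rintro x y ⟨h, T, hT, hx, hy⟩
    exact ⟨h.symm, T, hT, hy, hx⟩
  loopless := by constructor; rintro x ⟨h, -⟩; exact G.loopless.irrefl _ h

/-- The vertex set (in `V`) of a connected component of `G_△`. -/
def compVerts (G : SimpleGraph V) (c : (sepSubgraph G).ConnectedComponent) : Set V :=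
  {v | ∃ h : SepVertex G v, (sepSubgraph G).connectedComponentMk ⟨v, h⟩ = c}

/-- A connected component `c` of `G_△` is adjacent to a set `P` of triangles if some
separator triangle lying in `c` shares an edge with a triangle of `P`. -/
def CompAdjTriangles (G : SimpleGraph V) [DecidableEq V]
    (c : (sepSubgraph G).ConnectedComponent)
    (P : Set {T : Finset V // IsTriangle G T}) : Prop :=
  ∃ A : {T : Finset V // IsTriangle G T}, IsSeparatorTriangle G A.1 ∧
    (∀ v ∈ A.1, v ∈ compVerts G c) ∧ ∃ B ∈ P, (dualGraph G).Adj A B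

/-- A cyclic interval of `Fin m`. -/
def IsCyclicInterval {m : ℕ} (S : Set (Fin m)) : Prop :=
  ∃ a len : ℕ, S = {i : Fin m | ∃ j : ℕ, j < len ∧ i.val = (a + j) % m}

/-- `G` is the Halin graph obtained from the spanning tree `T` (with at least four
vertices and no vertex of degree 2) by joining the leaves of `T` in the cyclic order
`σ`.  The planarity of the construction is encoded by the requirement that for every
edge of `T` the leaves on either side of it occupy a cyclic interval of the outer
cycle. -/
def IsHalinStructure (G T : SimpleGraph V) [Fintype V] {m : ℕ} (σ : Fin m → V) : Prop :=
  T.IsTree ∧ 4 ≤ Fintype.card V ∧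
  (∀ v, ndeg T v ≠ 2) ∧
  Function.Injective σ ∧
  (∀ v, ndeg T v = 1 ↔ ∃ i, σ i = v) ∧
  (∀ v w, G.Adj v w ↔ T.Adj v w ∨
    ∃ i j : Fin m, j.val = (i.val + 1) % m ∧
      ((v = σ i ∧ w = σ j) ∨ (v = σ j ∧ w = σ i))) ∧
  (∀ v w, T.Adj v w →
    IsCyclicInterval {i : Fin m | (T.deleteEdges {s(v, w)}).Reachable v (σ i)})

/-- An end support vertex of the tree `T`: a vertex adjacent to a leaf with at most one
non-leaf neighbor. -/
def IsEndSupport (T : SimpleGraph V) (v : V) : Prop :=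
  (∃ u, T.Adj v u ∧ ndeg T u = 1) ∧ {u | T.Adj v u ∧ ndeg T u ≠ 1}.ncard ≤ 1

/-!
Coloring every `vᵢ` together with `u₀` and `w₀` forces the whole ring, one diamond after the
other, so `Z ≤ k + 2`. Conversely, the twins `vᵢ, wᵢ` of a diamond form a fort, so a loop zero
forcing set `S` contains one of them for every `i`. If `|S| ≤ k + 1`, this leaves at most two
vertices of `S` in the closed neighborhood of any vertex, since that neighborhood lies in one
diamond together with the `uⱼ` and `yⱼ`; as the graph is cubic, the vertices outside `S` then
form a fort as well. Hence `k + 2 ≤ Z_ℓ̇ ≤ Z`.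
-/

section Forcing

variable {V W : Type*} {G : SimpleGraph V} {H : SimpleGraph W} {S : Set V}

lemma ZeroForce.loopZeroForce {v : V} (h : ZeroForce G S v) : LoopZeroForce G S v := by
  induction h with
  | init v hv => exact .init v hv
  | force v w _ hadj _ ihv ih => exact .force v w ihv hadj ih

lemma IsZeroForcingSet.isLoopZeroForcingSet (hS : IsZeroForcingSet G S) :
    IsLoopZeroForcingSet G S :=
  fun v => (hS v).loopZeroForce

lemma ZeroForce.map (e : G ≃g H) {v : V} (h : ZeroForce G S v) :
    ZeroForce H (e '' S) (e v) := by
  induction h with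
  | init v hv => exact .init _ (Set.mem_image_of_mem e hv)
  | force v w _ hadj _ ihv ih =>
    refine .force _ _ ihv (e.map_adj_iff.mpr hadj) fun u hu hne => ?_
    obtain ⟨u, rfl⟩ := e.surjective u
    exact ih u (e.map_adj_iff.mp hu) (ne_of_apply_ne e hne)

lemma LoopZeroForce.map (e : G ≃g H) {v : V} (h : LoopZeroForce G S v) :
    LoopZeroForce H (e '' S) (e v) := by
  induction h with
  | init v hv => exact .init _ (Set.mem_image_of_mem e hv)
  | force v w _ hadj _ ihv ih =>
    refine .force _ _ ihv (e.map_adj_iff.mpr hadj) fun u hu hne => ?_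
    obtain ⟨u, rfl⟩ := e.surjective u
    exact ih u (e.map_adj_iff.mp hu) (ne_of_apply_ne e hne)
  | loop w _ ih =>
    refine .loop _ fun u hu => ?_
    obtain ⟨u, rfl⟩ := e.surjective u
    exact ih u (e.map_adj_iff.mp hu)

lemma IsZeroForcingSet.image (e : G ≃g H) (hS : IsZeroForcingSet G S) :
    IsZeroForcingSet H (e '' S) := fun w => by
  simpa using (hS (e.symm w)).map e

lemma IsLoopZeroForcingSet.image (e : G ≃g H) (hS : IsLoopZeroForcingSet G S) :
    IsLoopZeroForcingSet H (e '' S) := fun w => by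
  simpa using (hS (e.symm w)).map e

lemma zeroForcingNumber_le (hS : IsZeroForcingSet G S) : zeroForcingNumber G ≤ S.ncard := by
  unfold zeroForcingNumber
  exact Nat.sInf_le ⟨S, rfl, hS⟩

lemma loopZeroForcingNumber_le (hS : IsLoopZeroForcingSet G S) :
    loopZeroForcingNumber G ≤ S.ncard := by
  unfold loopZeroForcingNumber
  exact Nat.sInf_le ⟨S, rfl, hS⟩

lemma exists_isZeroForcingSet_ncard_eq (G : SimpleGraph V) :
    ∃ S : Set V, S.ncard = zeroForcingNumber G ∧ IsZeroForcingSet G S :=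
  Nat.sInf_mem (s := {n | ∃ S : Set V, S.ncard = n ∧ IsZeroForcingSet G S})
    ⟨_, Set.univ, rfl, fun v => .init v trivial⟩

lemma exists_isLoopZeroForcingSet_ncard_eq (G : SimpleGraph V) :
    ∃ S : Set V, S.ncard = loopZeroForcingNumber G ∧ IsLoopZeroForcingSet G S :=
  Nat.sInf_mem (s := {n | ∃ S : Set V, S.ncard = n ∧ IsLoopZeroForcingSet G S})
    ⟨_, Set.univ, rfl, fun v => .init v trivial⟩

lemma le_loopZeroForcingNumber {m : ℕ} (h : ∀ S, IsLoopZeroForcingSet G S → m ≤ S.ncard) :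
    m ≤ loopZeroForcingNumber G := by
  obtain ⟨S, hS, hZ⟩ := exists_isLoopZeroForcingSet_ncard_eq G
  exact hS ▸ h S hZ

lemma loopZeroForcingNumber_le_zeroForcingNumber (G : SimpleGraph V) :
    loopZeroForcingNumber G ≤ zeroForcingNumber G := by
  obtain ⟨S, hS, hZ⟩ := exists_isZeroForcingSet_ncard_eq G
  exact hS ▸ loopZeroForcingNumber_le hZ.isLoopZeroForcingSet

lemma zeroForcingNumber_le_of_iso (e : G ≃g H) : zeroForcingNumber H ≤ zeroForcingNumber G := by
  obtain ⟨S, hS, hZ⟩ := exists_isZeroForcingSet_ncard_eq G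
  calc zeroForcingNumber H ≤ (e '' S).ncard := zeroForcingNumber_le (hZ.image e)
    _ = zeroForcingNumber G := by rw [Set.ncard_image_of_injective S e.injective, hS]

lemma loopZeroForcingNumber_le_of_iso (e : G ≃g H) :
    loopZeroForcingNumber H ≤ loopZeroForcingNumber G := by
  obtain ⟨S, hS, hZ⟩ := exists_isLoopZeroForcingSet_ncard_eq G
  calc loopZeroForcingNumber H ≤ (e '' S).ncard := loopZeroForcingNumber_le (hZ.image e)
    _ = loopZeroForcingNumber G := by rw [Set.ncard_image_of_injective S e.injective, hS]

lemma zeroForcingNumber_congr (e : G ≃g H) : zeroForcingNumber G = zeroForcingNumber H :=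
  (zeroForcingNumber_le_of_iso e.symm).antisymm (zeroForcingNumber_le_of_iso e)

lemma loopZeroForcingNumber_congr (e : G ≃g H) :
    loopZeroForcingNumber G = loopZeroForcingNumber H :=
  (loopZeroForcingNumber_le_of_iso e.symm).antisymm (loopZeroForcingNumber_le_of_iso e)

def IsLoopFort (G : SimpleGraph V) (F : Set V) : Prop :=
  F.Nonempty ∧ (∀ v ∈ F, ∃ u ∈ F, G.Adj v u) ∧
    ∀ v ∉ F, ∀ w ∈ F, G.Adj v w → ∃ w' ∈ F, w' ≠ w ∧ G.Adj v w'

lemma LoopZeroForce.notMem_of_isLoopFort {F : Set V} (hF : IsLoopFort G F)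
    (hSF : Disjoint S F) {v : V} (h : LoopZeroForce G S v) : v ∉ F := by
  induction h with
  | init v hv => exact hSF.notMem_of_mem_left hv
  | force v w _ hadj _ ihv ih =>
    intro hw
    obtain ⟨w', hw', hne, hadj'⟩ := hF.2.2 v ihv w hw hadj
    exact ih w' hadj' hne hw'
  | loop w _ ih =>
    intro hw
    obtain ⟨u, hu, hadj⟩ := hF.2.1 w hw
    exact ih u hadj hu

lemma IsLoopZeroForcingSet.inter_nonempty {F : Set V} (hS : IsLoopZeroForcingSet G S)
    (hF : IsLoopFort G F) : (S ∩ F).Nonempty := by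
  rw [← Set.not_disjoint_iff_nonempty_inter]
  intro hSF
  obtain ⟨v, hv⟩ := hF.1
  exact (hS v).notMem_of_isLoopFort hF hSF hv

lemma isLoopFort_pair {a b : V} (hab : G.Adj a b)
    (htwin : ∀ x, x ≠ a → x ≠ b → (G.Adj a x ↔ G.Adj b x)) : IsLoopFort G {a, b} := by
  refine ⟨Set.insert_nonempty a {b}, ?_, ?_⟩
  · rintro v (rfl | rfl)
    exacts [⟨b, by simp, hab⟩, ⟨a, by simp, hab.symm⟩]
  · intro v hv w hw hadj
    obtain ⟨hva, hvb⟩ : v ≠ a ∧ v ≠ b := by simpa [not_or] using hv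
    rcases hw with rfl | rfl
    · exact ⟨b, by simp, hab.ne', ((htwin v hva hvb).1 hadj.symm).symm⟩
    · exact ⟨a, by simp, hab.ne, ((htwin v hva hvb).2 hadj.symm).symm⟩

lemma isLoopFort_compl [Finite V] (hS : S ≠ Set.univ) (hdeg : ∀ x, 3 ≤ ndeg G x)
    (hsparse : ∀ x, (S ∩ closedNbhd G x).ncard ≤ 2) : IsLoopFort G Sᶜ := by
  refine ⟨Set.nonempty_compl.mpr hS, fun v hv => ?_, fun v hv w hw hadj => ?_⟩
  · by_contra! h
    have hsub : G.neighborSet v ⊆ S ∩ closedNbhd G v := fun u hu =>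
      ⟨not_not.mp fun hu' => h u hu' hu, Set.mem_insert_of_mem _ hu⟩
    have := Set.ncard_le_ncard hsub
    have := hdeg v
    have := hsparse v
    unfold ndeg at *
    omega
  · by_contra! h
    have hsub : closedNbhd G v ⊆ insert w (S ∩ closedNbhd G v) := by
      rintro u hu
      by_cases huw : u = w
      · exact .inl huw
      · refine .inr ⟨?_, hu⟩
        rcases hu with rfl | hu
        · exact not_not.mp hv
        · exact not_not.mp fun hu' => h u hu' huw hu
    have hclosed : (closedNbhd G v).ncard = ndeg G v + 1 :=
      Set.ncard_insert_of_notMem (G.notMem_neighborSet_self (a := v))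
    have := (Set.ncard_le_ncard hsub).trans (Set.ncard_insert_le _ _)
    have := hdeg v
    have := hsparse v
    omega

end Forcing

lemma Fin.val_eq_add_one_mod_iff {n : ℕ} [NeZero n] {i j : Fin n} :
    j.val = (i.val + 1) % n ↔ j = i + 1 := by
  rw [Fin.ext_iff, Fin.val_add, Fin.val_one', Nat.add_mod_mod]

namespace ringOfDiamonds

variable {k : ℕ}

lemma adj_v_iff (i : Fin k) (q : Fin k × Fin 4) :
    (ringOfDiamonds k).Adj (i, 1) q ↔ q = (i, 0) ∨ q = (i, 2) ∨ q = (i, 3) := by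
  obtain ⟨j, b⟩ := q
  rw [ringOfDiamonds, fromRel_adj]
  fin_cases b <;> simp [Prod.ext_iff, eq_comm]

lemma adj_w_iff (i : Fin k) (q : Fin k × Fin 4) :
    (ringOfDiamonds k).Adj (i, 2) q ↔ q = (i, 0) ∨ q = (i, 1) ∨ q = (i, 3) := by
  obtain ⟨j, b⟩ := q
  rw [ringOfDiamonds, fromRel_adj]
  fin_cases b <;> simp [Prod.ext_iff, eq_comm]

lemma isLoopFort_twins (i : Fin k) : IsLoopFort (ringOfDiamonds k) {(i, 1), (i, 2)} :=
  isLoopFort_pair ((adj_v_iff i _).2 (by simp)) fun x h1 h2 => by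
    rw [adj_v_iff, adj_w_iff]
    tauto

/-- Outside the diamond `i` and the vertices `uⱼ`, `yⱼ` lie only the twins `vⱼ`, `wⱼ` of the
other diamonds, and `S` contains one of each pair. -/
lemma ncard_inter_le_two {S : Set (Fin k × Fin 4)} (hS : ∀ j, (j, 1) ∈ S ∨ (j, 2) ∈ S)
    (hcard : S.ncard ≤ k + 1) (i : Fin k) :
    (S ∩ {p | p.1 = i ∨ p.2 = 0 ∨ p.2 = 3}).ncard ≤ 2 := by
  set D : Set (Fin k × Fin 4) := {p | p.1 = i ∨ p.2 = 0 ∨ p.2 = 3}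
  have hout : {i}ᶜ ⊆ Prod.fst '' (S \ D) := by
    intro j hj
    rcases hS j with h | h <;> exact ⟨_, ⟨h, by simpa [D] using hj⟩, rfl⟩
  have hcompl : ({i}ᶜ : Set (Fin k)).ncard = k - 1 := by
    rw [Set.ncard_compl, Set.ncard_singleton, Nat.card_eq_fintype_card, Fintype.card_fin]
  have := (Set.ncard_le_ncard hout).trans (Set.ncard_image_le (f := Prod.fst))
  have := Set.ncard_inter_add_ncard_sdiff_eq_ncard S D
  omega

variable [NeZero k]

lemma adj_u_iff (i : Fin k) (q : Fin k × Fin 4) :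
    (ringOfDiamonds k).Adj (i, 0) q ↔ q = (i, 1) ∨ q = (i, 2) ∨ q = (i - 1, 3) := by
  obtain ⟨j, b⟩ := q
  rw [ringOfDiamonds, fromRel_adj]
  fin_cases b <;> simp [Prod.ext_iff, eq_comm, Fin.val_eq_add_one_mod_iff, eq_sub_iff_add_eq]

lemma adj_y_iff (i : Fin k) (q : Fin k × Fin 4) :
    (ringOfDiamonds k).Adj (i, 3) q ↔ q = (i, 1) ∨ q = (i, 2) ∨ q = (i + 1, 0) := by
  obtain ⟨j, b⟩ := q
  rw [ringOfDiamonds, fromRel_adj]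
  fin_cases b <;> simp [Prod.ext_iff, eq_comm, Fin.val_eq_add_one_mod_iff]

lemma ndeg_eq_three (x : Fin k × Fin 4) : ndeg (ringOfDiamonds k) x = 3 := by
  obtain ⟨i, b⟩ := x
  rw [ndeg, Set.ncard_eq_three]
  fin_cases b
  · exact ⟨(i, 1), (i, 2), (i - 1, 3), by simp, by simp, by simp, Set.ext (adj_u_iff i)⟩
  · exact ⟨(i, 0), (i, 2), (i, 3), by simp, by simp, by simp, Set.ext (adj_v_iff i)⟩
  · exact ⟨(i, 0), (i, 1), (i, 3), by simp, by simp, by simp, Set.ext (adj_w_iff i)⟩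
  · exact ⟨(i, 1), (i, 2), (i + 1, 0), by simp, by simp, by simp, Set.ext (adj_y_iff i)⟩

lemma closedNbhd_subset (x : Fin k × Fin 4) :
    closedNbhd (ringOfDiamonds k) x ⊆ {p | p.1 = x.1 ∨ p.2 = 0 ∨ p.2 = 3} := by
  obtain ⟨i, b⟩ := x
  rintro q (rfl | hq)
  · simp
  fin_cases b
  · rcases (adj_u_iff i q).1 hq with rfl | rfl | rfl <;> simp
  · rcases (adj_v_iff i q).1 hq with rfl | rfl | rfl <;> simp
  · rcases (adj_w_iff i q).1 hq with rfl | rfl | rfl <;> simp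
  · rcases (adj_y_iff i q).1 hq with rfl | rfl | rfl <;> simp

lemma add_two_le_loopZeroForcingNumber : k + 2 ≤ loopZeroForcingNumber (ringOfDiamonds k) := by
  refine le_loopZeroForcingNumber fun S hS => ?_
  by_contra! hcard
  have htwins : ∀ j, (j, 1) ∈ S ∨ (j, 2) ∈ S := fun j => by
    obtain ⟨x, hxS, rfl | rfl⟩ := hS.inter_nonempty (isLoopFort_twins j)
    exacts [.inl hxS, .inr hxS]
  have hne : S ≠ Set.univ := by
    rintro rfl
    have := NeZero.pos k
    simp only [Set.ncard_univ, Nat.card_eq_fintype_card, Fintype.card_prod,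
      Fintype.card_fin] at hcard
    omega
  have hsparse (x : Fin k × Fin 4) : (S ∩ closedNbhd (ringOfDiamonds k) x).ncard ≤ 2 :=
    (Set.ncard_le_ncard (Set.inter_subset_inter_right S (closedNbhd_subset x))).trans
      (ncard_inter_le_two htwins (by omega) x.1)
  obtain ⟨x, hxS, hx⟩ :=
    hS.inter_nonempty (isLoopFort_compl hne (fun x => (ndeg_eq_three x).ge) hsparse)
  exact hx hxS

def forcingSet (k : ℕ) [NeZero k] : Set (Fin k × Fin 4) :=
  insert (0, 0) (insert (0, 2) (Set.range fun j => (j, 1)))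

lemma ncard_forcingSet : (forcingSet k).ncard = k + 2 := by
  rw [forcingSet, Set.ncard_insert_of_notMem (by simp), Set.ncard_insert_of_notMem (by simp),
    Set.ncard_range_of_injective fun _ _ h => (Prod.ext_iff.1 h).1, Nat.card_eq_fintype_card,
    Fintype.card_fin]

/-- Once a diamond is blue, `yᵢ` forces `uᵢ₊₁`, which forces `wᵢ₊₁`, and `vᵢ₊₁` forces
`yᵢ₊₁`. -/
lemma zeroForce_succ {S : Set (Fin k × Fin 4)} (hS : ∀ j, (j, 1) ∈ S) {i : Fin k}
    (hi : ∀ b, ZeroForce (ringOfDiamonds k) S (i, b)) (b : Fin 4) :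
    ZeroForce (ringOfDiamonds k) S (i + 1, b) := by
  have hu : ZeroForce (ringOfDiamonds k) S (i + 1, 0) :=
    .force (i, 3) _ (hi 3) ((adj_y_iff i _).2 (by simp)) fun q hq hne => by
      rcases (adj_y_iff i q).1 hq with rfl | rfl | rfl
      exacts [hi 1, hi 2, absurd rfl hne]
  have hv : ZeroForce (ringOfDiamonds k) S (i + 1, 1) := .init _ (hS _)
  have hw : ZeroForce (ringOfDiamonds k) S (i + 1, 2) :=
    .force (i + 1, 0) _ hu ((adj_u_iff _ _).2 (by simp)) fun q hq hne => by
      rcases (adj_u_iff _ q).1 hq with rfl | rfl | rfl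
      exacts [hv, absurd rfl hne, by simpa using hi 3]
  have hy : ZeroForce (ringOfDiamonds k) S (i + 1, 3) :=
    .force (i + 1, 1) _ hv ((adj_v_iff _ _).2 (by simp)) fun q hq hne => by
      rcases (adj_v_iff _ q).1 hq with rfl | rfl | rfl
      exacts [hu, hw, absurd rfl hne]
  fin_cases b
  exacts [hu, hv, hw, hy]

open Fin.NatCast in
lemma isZeroForcingSet_forcingSet : IsZeroForcingSet (ringOfDiamonds k) (forcingSet k) := by
  have hv (j : Fin k) : (j, 1) ∈ forcingSet k := .inr (.inr ⟨j, rfl⟩)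
  have h₀ (b : Fin 4) : ZeroForce (ringOfDiamonds k) (forcingSet k) (0, b) := by
    have hy : ZeroForce (ringOfDiamonds k) (forcingSet k) (0, 3) :=
      .force (0, 1) _ (.init _ (hv 0)) ((adj_v_iff _ _).2 (by simp)) fun q hq hne => by
        rcases (adj_v_iff _ q).1 hq with rfl | rfl | rfl
        exacts [.init _ (.inl rfl), .init _ (.inr (.inl rfl)), absurd rfl hne]
    fin_cases b
    exacts [.init _ (.inl rfl), .init _ (hv 0), .init _ (.inr (.inl rfl)), hy]
  have hn (n : ℕ) (b : Fin 4) : ZeroForce (ringOfDiamonds k) (forcingSet k) ((n : Fin k), b) := by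
    induction n generalizing b with
    | zero => simpa using h₀ b
    | succ n ih => simpa using zeroForce_succ hv ih b
  rintro ⟨i, b⟩
  simpa using hn i b

lemma zeroForcingNumber_le_add_two : zeroForcingNumber (ringOfDiamonds k) ≤ k + 2 :=
  ncard_forcingSet (k := k) ▸ zeroForcingNumber_le isZeroForcingSet_forcingSet

end ringOfDiamonds

/-- If `G` is a ring of `k ≥ 2` diamonds, then `Z_ℓ̇(G) = Z(G) = n(G)/4 + 2`. -/
theorem stmt_1 {V : Type*} [Fintype V] (G : SimpleGraph V) (k : ℕ) (hk : 2 ≤ k)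
    (hiso : Nonempty (G ≃g ringOfDiamonds k)) :
    loopZeroForcingNumber G = Fintype.card V / 4 + 2 ∧
      zeroForcingNumber G = Fintype.card V / 4 + 2 := by
  obtain ⟨e⟩ := hiso
  have : NeZero k := ⟨by omega⟩
  have hn : Fintype.card V / 4 = k := by simp [Fintype.card_congr e.toEquiv]
  rw [hn, loopZeroForcingNumber_congr e, zeroForcingNumber_congr e]
  have hZℓ := ringOfDiamonds.add_two_le_loopZeroForcingNumber (k := k)
  have hZ := ringOfDiamonds.zeroForcingNumber_le_add_two (k := k)
  have := loopZeroForcingNumber_le_zeroForcingNumber (ringOfDiamonds k)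
  omega
end

section
/- Let G be a maximal outerplanar graph with at least one separator triangle (t ≥ 1) whose subgraph G_△ formed by the separator triangles has exactly one connected component. Then the zero forcing number of G satisfies Z(G) ≥ ⌈n_2/2⌉, where n_2 is the number of vertices of degree 2 in G. -/
open SimpleGraph

variable {V : Type*}

/-!
In a maximal outerplanar graph on `n` vertices the `2n - 3` edges already form a largest
family of pairwise noncrossing chords of the polygon. A vertex of degree 2 is therefore an ear:
its neighbors are its two neighbors on the outer cycle, and if they were not adjacent, the
chord joining them would cross no edge and could be added.

An ear outside a zero forcing set `S` never forces: when it is forced, its other neighbor is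
already blue. Each vertex outside `S` is forced by exactly one vertex and no vertex forces twice,
so exactly `|S|` vertices never force. Hence at most `|S|` ears lie outside `S`, and `n₂ ≤ 2|S|`.
-/

open Filter

section

variable {G : SimpleGraph V} {S : Set V}

def IsEar (G : SimpleGraph V) (v : V) : Prop :=
  ∃ u w, G.neighborSet v = {u, w} ∧ G.Adj u w

def blueAfter (G : SimpleGraph V) (S : Set V) : ℕ → Set V
  | 0 => S
  | k + 1 => blueAfter G S k ∪
      {w | ∃ v ∈ blueAfter G S k, G.Adj v w ∧ ∀ u, G.Adj v u → u ≠ w → u ∈ blueAfter G S k}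

lemma blueAfter_mono : Monotone (blueAfter G S) :=
  monotone_nat_of_le_succ fun _ => Set.subset_union_left

lemma ZeroForce.eventually_mem_blueAfter [Finite V] {v : V} (hv : ZeroForce G S v) :
    ∀ᶠ k in atTop, v ∈ blueAfter G S k := by
  induction hv with
  | init v hvS => exact .of_forall fun k => blueAfter_mono (Nat.zero_le k) hvS
  | force v w _ hadj _ ihv ihu =>
    have hready : ∀ᶠ k in atTop,
        v ∈ blueAfter G S k ∧ ∀ u, G.Adj v u → u ≠ w → u ∈ blueAfter G S k := by
      refine ihv.and (eventually_all.2 fun u => ?_)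
      by_cases hu : G.Adj v u ∧ u ≠ w
      · exact (ihu u hu.1 hu.2).mono fun _ hk _ _ => hk
      · exact .of_forall fun _ h₁ h₂ => absurd ⟨h₁, h₂⟩ hu
    obtain ⟨N, hN⟩ := eventually_atTop.1 hready
    exact eventually_atTop.2 ⟨N + 1, fun k hk =>
      blueAfter_mono hk (Or.inr ⟨v, (hN N le_rfl).1, hadj, (hN N le_rfl).2⟩)⟩

/-- `P x` is a vertex that forces `x` at time `t x`. -/
def IsForcingChronology (G : SimpleGraph V) (S : Set V) (t : V → ℕ) (P : V → V) : Prop :=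
  ∀ x ∉ S, G.Adj (P x) x ∧ t (P x) < t x ∧ ∀ u, G.Adj (P x) u → u ≠ x → t u < t x

lemma IsZeroForcingSet.exists_forcingChronology [Finite V] (hS : IsZeroForcingSet G S) :
    ∃ t P, IsForcingChronology G S t P := by
  classical
  have hblue : ∀ x, ∃ k, x ∈ blueAfter G S k := fun x =>
    (hS x).eventually_mem_blueAfter.exists
  let t x := Nat.find (hblue x)
  have hforcer : ∀ x, ∃ p, x ∉ S →
      G.Adj p x ∧ t p < t x ∧ ∀ u, G.Adj p u → u ≠ x → t u < t x := by
    intro x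
    by_cases hxS : x ∈ S
    · exact ⟨x, fun h => absurd hxS h⟩
    obtain ⟨k, hk⟩ : ∃ k, t x = k + 1 := Nat.exists_eq_succ_of_ne_zero fun h =>
      hxS (by simpa [t, h, blueAfter] using Nat.find_spec (hblue x))
    have hnew : x ∉ blueAfter G S k := Nat.find_min (hblue x) (show k < t x by omega)
    have hmem : x ∈ blueAfter G S (k + 1) := hk ▸ Nat.find_spec (hblue x)
    obtain ⟨p, hp, hadj, hrest⟩ := hmem.resolve_left hnew
    refine ⟨p, fun _ => ⟨hadj, ?_, fun u hu hux => ?_⟩⟩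
    · exact hk ▸ Nat.lt_succ_of_le (Nat.find_min' _ hp)
    · exact hk ▸ Nat.lt_succ_of_le (Nat.find_min' _ (hrest u hu hux))
  choose P hP using hforcer
  exact ⟨t, P, fun x hx => hP x hx⟩

namespace IsForcingChronology

variable {t : V → ℕ} {P : V → V}

lemma injOn (h : IsForcingChronology G S t P) : Set.InjOn P Sᶜ := by
  intro x hx y hy hxy
  by_contra hne
  have hyx := (h x hx).2.2 y (hxy ▸ (h y hy).1) (Ne.symm hne)
  have hxy' := (h y hy).2.2 x (hxy ▸ (h x hx).1) hne
  omega

lemma notMem_image_of_isEar (h : IsForcingChronology G S t P) {e : V} (he : IsEar G e)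
    (heS : e ∉ S) : e ∉ P '' Sᶜ := by
  rintro ⟨x, hx, rfl⟩
  obtain ⟨u, w, hN, huw⟩ := he
  obtain ⟨hxadj, hxt, -⟩ := h x hx
  obtain ⟨hPadj, hPt, hPrest⟩ := h (P x) heS
  have hxN : x ∈ G.neighborSet (P x) := hxadj
  have hPN : P (P x) ∈ G.neighborSet (P x) := (G.mem_neighborSet _ _).2 hPadj.symm
  rw [hN] at hxN hPN
  by_cases hxP : x = P (P x)
  · rw [← hxP] at hPt
    omega
  have hadj : G.Adj (P (P x)) x := by
    simp only [Set.mem_insert_iff, Set.mem_singleton_iff] at hxN hPN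
    rcases hxN with rfl | rfl <;> rcases hPN with h' | h' <;> rw [h'] at hxP ⊢
    exacts [absurd rfl hxP, huw.symm, huw, absurd rfl hxP]
  have := hPrest x hadj hxadj.ne.symm
  omega

lemma ncard_compl_image [Finite V] (h : IsForcingChronology G S t P) :
    (P '' Sᶜ)ᶜ.ncard = S.ncard := by
  have h₁ := Set.ncard_add_ncard_compl (P '' Sᶜ)
  have h₂ := Set.ncard_add_ncard_compl S
  rw [h.injOn.ncard_image] at h₁
  omega

end IsForcingChronology

theorem IsZeroForcingSet.ncard_le_two_mul [Finite V] (hS : IsZeroForcingSet G S) {E : Set V}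
    (hE : ∀ e ∈ E, IsEar G e) : E.ncard ≤ 2 * S.ncard := by
  obtain ⟨t, P, hP⟩ := hS.exists_forcingChronology
  have hends : E \ S ⊆ (P '' Sᶜ)ᶜ := fun e he =>
    hP.notMem_image_of_isEar (hE e he.1) he.2
  have h₁ : (E ∩ S).ncard ≤ S.ncard := Set.ncard_le_ncard Set.inter_subset_right
  have h₂ := Set.ncard_le_ncard hends
  rw [hP.ncard_compl_image] at h₂
  have h₃ := Set.ncard_inter_add_ncard_sdiff_eq_ncard E S
  omega

/-- Pairs `(a, b)` with `a < b` stand for chords of a convex polygon with vertices `0, 1, 2, …`;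
two chords cross iff their endpoints interleave. -/
def IsNoncrossing (F : Finset (ℕ × ℕ)) : Prop :=
  ∀ p ∈ F, ∀ q ∈ F, ¬(p.1 < q.1 ∧ q.1 < p.2 ∧ p.2 < q.2)

lemma IsNoncrossing.subset {F F' : Finset (ℕ × ℕ)} (hF : IsNoncrossing F) (h : F' ⊆ F) :
    IsNoncrossing F' :=
  fun p hp q hq => hF p (h hp) q (h hq)

lemma IsNoncrossing.subset_insert_union {F : Finset (ℕ × ℕ)} (hF : IsNoncrossing F)
    {a b c : ℕ} (hab : ∀ p ∈ F, a ≤ p.1 ∧ p.1 < p.2 ∧ p.2 ≤ b) (hac : (a, c) ∈ F)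
    (hmax : ∀ p ∈ F, p.1 = a → p.2 < b → p.2 ≤ c) :
    F ⊆ insert (a, b) ((F.filter fun p => p.2 ≤ c) ∪ F.filter fun p => c ≤ p.1) := by
  intro p hp
  obtain ⟨h₁, -, h₃⟩ := hab p hp
  simp only [Finset.mem_insert, Finset.mem_union, Finset.mem_filter]
  by_contra! hout
  obtain ⟨hpab, hpc₂, hpc₁⟩ := hout
  rcases h₁.eq_or_lt with hpa | hpa
  · have := hmax p hp hpa.symm (h₃.lt_of_ne fun hpb => hpab (Prod.ext hpa.symm hpb))
    have := hpc₂ hp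
    omega
  · exact hF _ hac p hp ⟨hpa, hpc₁ hp, hpc₂ hp⟩

theorem IsNoncrossing.card_le {F : Finset (ℕ × ℕ)} (hF : IsNoncrossing F) {a b : ℕ}
    (hab : ∀ p ∈ F, a ≤ p.1 ∧ p.1 < p.2 ∧ p.2 ≤ b) : F.card ≤ 2 * (b - a) - 1 := by
  induction hd : b - a using Nat.strong_induction_on generalizing F a b with
  | _ d ih =>
  rcases F.eq_empty_or_nonempty with rfl | ⟨p₀, hp₀⟩
  · simp
  have hd0 : 0 < d := by have := hab p₀ hp₀; omega
  have hfilter : ∀ (P : ℕ × ℕ → Prop) [DecidablePred P] (a' b' : ℕ), b' - a' < d →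
      (∀ p ∈ F, P p → a' ≤ p.1 ∧ p.2 ≤ b') → (F.filter P).card ≤ 2 * (b' - a') - 1 :=
    fun P _ a' b' hlt hP => ih _ hlt (hF.subset (Finset.filter_subset P F)) (fun p hp => by
      obtain ⟨hpF, hpP⟩ := Finset.mem_filter.1 hp
      have := hab p hpF
      have := hP p hpF hpP
      omega) rfl
  set C := F.filter fun p => p.1 = a ∧ p.2 < b
  rcases C.eq_empty_or_nonempty with hC | hC
  · -- no chord leaves `a` except possibly `(a, b)`, so `a` can be deleted
    have hsub : F ⊆ insert (a, b) (F.filter fun p => a + 1 ≤ p.1) := by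
      intro p hp
      obtain ⟨h₁, h₂, h₃⟩ := hab p hp
      rw [Finset.mem_insert, Finset.mem_filter]
      by_cases hpa : p.1 = a
      · exact Or.inl (Prod.ext hpa (by have := Finset.filter_eq_empty_iff.1 hC hp; omega))
      · exact Or.inr ⟨hp, by omega⟩
    have hR := hfilter (fun p => a + 1 ≤ p.1) (a + 1) b (by omega)
      fun p hp h => ⟨h, (hab p hp).2.2⟩
    have := (Finset.card_le_card hsub).trans (Finset.card_insert_le _ _)
    omega
  · obtain ⟨q, hqC, hqmax⟩ := C.exists_max_image Prod.snd hC
    obtain ⟨hqF, hqa, hqb⟩ := Finset.mem_filter.1 hqC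
    have hac : a < q.2 := by have := hab q hqF; omega
    have hsub := hF.subset_insert_union hab (c := q.2) (by rw [← hqa]; exact hqF)
      fun p hp h₁ h₂ => hqmax p (Finset.mem_filter.2 ⟨hp, h₁, h₂⟩)
    have hL := hfilter (fun p => p.2 ≤ q.2) a q.2 (by omega) fun p hp h => ⟨(hab p hp).1, h⟩
    have hR := hfilter (fun p => q.2 ≤ p.1) q.2 b (by omega) fun p hp h => ⟨h, (hab p hp).2.2⟩
    have := (Finset.card_le_card hsub).trans
      ((Finset.card_insert_le _ _).trans (Nat.add_le_add_right (Finset.card_union_le _ _) 1))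
    omega

def edgeIndexPairs (G : SimpleGraph V) [DecidableRel G.Adj] {n : ℕ} (f : Fin n ≃ V) :
    Finset (ℕ × ℕ) :=
  (Finset.univ.filter fun p : Fin n × Fin n => p.1 < p.2 ∧ G.Adj (f p.1) (f p.2)).image
    (Prod.map Fin.val Fin.val)

lemma mem_edgeIndexPairs [DecidableRel G.Adj] {n : ℕ} {f : Fin n ≃ V} {p : ℕ × ℕ} :
    p ∈ edgeIndexPairs G f ↔ ∃ a b : Fin n, a < b ∧ G.Adj (f a) (f b) ∧ p = (a.val, b.val) := by
  simp [edgeIndexPairs, eq_comm, and_assoc]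

lemma card_edgeIndexPairs [DecidableRel G.Adj] {n : ℕ} (f : Fin n ≃ V) :
    (edgeIndexPairs G f).card = G.edgeSet.ncard := by
  rw [edgeIndexPairs,
    Finset.card_image_of_injective _ (Fin.val_injective.prodMap Fin.val_injective),
    ← Set.ncard_coe_finset, Finset.coe_filter]
  refine Set.ncard_congr (fun p _ => s(f p.1, f p.2)) (fun p hp => hp.2.2) ?_ ?_
  · rintro ⟨a, b⟩ ⟨c, d⟩ ⟨-, hab, -⟩ ⟨-, hcd, -⟩ h
    simp only [Sym2.eq_iff, f.injective.eq_iff] at h hab hcd ⊢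
    rcases h with h | ⟨rfl, rfl⟩
    · exact Prod.ext h.1 h.2
    · exact absurd (hab.trans hcd) (lt_irrefl _)
  · intro e he
    induction e using Sym2.ind with
    | _ x y =>
    have hxy : f.symm x ≠ f.symm y := f.symm.injective.ne (G.ne_of_adj he)
    rcases hxy.lt_or_gt with h | h
    · exact ⟨(f.symm x, f.symm y), ⟨Finset.mem_univ _, h, by simpa using he⟩, by simp⟩
    · exact ⟨(f.symm y, f.symm x), ⟨Finset.mem_univ _, h, by simpa using he.symm⟩,
        by simp [Sym2.eq_swap]⟩

/-- `k` is the only vertex on one side of the chord joining its two cycle neighbors. -/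
lemma exists_cyclic_neighbors {n : ℕ} (hn : 3 ≤ n) (k : Fin n) :
    ∃ lo hi : Fin n, lo < hi ∧
      (lo.val = (k.val + 1) % n ∨ k.val = (lo.val + 1) % n) ∧
      (hi.val = (k.val + 1) % n ∨ k.val = (hi.val + 1) % n) ∧
      ∀ x y : ℕ, y < n → (x < lo ∧ lo < y ∧ y < hi ∨ lo < x ∧ x < hi ∧ hi < y) →
        x = k ∨ y = k := by
  obtain ⟨k, hk⟩ := k
  have hwrap : (n - 1 + 1) % n = 0 := by rw [Nat.sub_add_cancel (by omega), Nat.mod_self]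
  rcases Nat.eq_zero_or_pos k with rfl | hk0
  · refine ⟨⟨1, by omega⟩, ⟨n - 1, by omega⟩, ?_, Or.inl ?_, Or.inr hwrap.symm, ?_⟩
    · simp only [Fin.mk_lt_mk]; omega
    · simp only [zero_add]; exact (Nat.mod_eq_of_lt (by omega)).symm
    · simp only; omega
  rcases Nat.lt_or_ge (k + 1) n with hk1 | hk1
  · refine ⟨⟨k - 1, by omega⟩, ⟨k + 1, hk1⟩, ?_, Or.inr ?_,
      Or.inl (Nat.mod_eq_of_lt hk1).symm, ?_⟩
    · simp only [Fin.mk_lt_mk]; omega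
    · simp only; rw [Nat.sub_add_cancel hk0, Nat.mod_eq_of_lt hk]
    · simp only; omega
  · refine ⟨⟨0, by omega⟩, ⟨n - 2, by omega⟩, ?_, Or.inl ?_, Or.inr ?_, ?_⟩
    · simp only [Fin.mk_lt_mk]; omega
    · simp only; rw [show k = n - 1 by omega, hwrap]
    · simp only; rw [show n - 2 + 1 = n - 1 by omega, Nat.mod_eq_of_lt (by omega)]; omega
    · simp only; omega

lemma IsNoncrossing.insert {F : Finset (ℕ × ℕ)} (hF : IsNoncrossing F) {q : ℕ × ℕ}
    (hq : ∀ p ∈ F,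
      ¬(p.1 < q.1 ∧ q.1 < p.2 ∧ p.2 < q.2) ∧ ¬(q.1 < p.1 ∧ p.1 < q.2 ∧ q.2 < p.2)) :
    IsNoncrossing (insert q F) := by
  intro p hp r hr
  rcases Finset.mem_insert.1 hp with rfl | hpF
  · rcases Finset.mem_insert.1 hr with rfl | hrF
    exacts [by omega, (hq r hrF).2]
  · rcases Finset.mem_insert.1 hr with rfl | hrF
    exacts [(hq p hpF).1, hF p hpF r hrF]

lemma isNoncrossing_edgeIndexPairs [DecidableRel G.Adj] {n : ℕ} {f : Fin n ≃ V}
    (hcross : ∀ a b c d : Fin n, a.val < c.val → c.val < b.val → b.val < d.val →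
      G.Adj (f a) (f b) → ¬ G.Adj (f c) (f d)) :
    IsNoncrossing (edgeIndexPairs G f) := by
  intro p hp q hq
  obtain ⟨a, b, -, hab, rfl⟩ := mem_edgeIndexPairs.1 hp
  obtain ⟨c, d, -, hcd, rfl⟩ := mem_edgeIndexPairs.1 hq
  exact fun h => hcross a b c d h.1 h.2.1 h.2.2 hab hcd

theorem isEar_of_ndeg_eq_two_of_noncrossing {n : ℕ} (hn : 3 ≤ n) (f : Fin n ≃ V)
    (hcyc : ∀ i j : Fin n, j.val = (i.val + 1) % n → G.Adj (f i) (f j))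
    (hcross : ∀ a b c d : Fin n, a.val < c.val → c.val < b.val → b.val < d.val →
      G.Adj (f a) (f b) → ¬ G.Adj (f c) (f d))
    (hcard : G.edgeSet.ncard = 2 * n - 3) {v : V} (hv : ndeg G v = 2) : IsEar G v := by
  classical
  have : Finite V := .of_equiv _ f
  obtain ⟨k, rfl⟩ := f.surjective v
  obtain ⟨lo, hi, hlohi, hlo, hhi, hkey⟩ := exists_cyclic_neighbors hn k
  have hcycAdj : ∀ j : Fin n, (j.val = (k.val + 1) % n ∨ k.val = (j.val + 1) % n) →
      G.Adj (f k) (f j) := by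
    rintro j (h | h)
    exacts [hcyc _ _ h, (hcyc _ _ h).symm]
  have hN : G.neighborSet (f k) = {f lo, f hi} := by
    refine (Set.eq_of_subset_of_ncard_le ?_ ?_).symm
    · rintro x (rfl | rfl)
      exacts [hcycAdj lo hlo, hcycAdj hi hhi]
    · rw [← ndeg, hv, Set.ncard_pair (f.injective.ne hlohi.ne)]
  refine ⟨f lo, f hi, hN, ?_⟩
  by_contra hadj
  have hnew : (lo.val, hi.val) ∉ edgeIndexPairs G f := by
    rw [mem_edgeIndexPairs]
    rintro ⟨a, b, -, hab, hp⟩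
    simp only [Prod.mk.injEq] at hp
    rw [Fin.ext hp.1, Fin.ext hp.2] at hadj
    exact hadj hab
  have hend : ∀ j : Fin n, G.Adj (f k) (f j) → j.val = lo.val ∨ j.val = hi.val := by
    intro j hj
    rcases (hN ▸ hj : f j ∈ ({f lo, f hi} : Set V)) with h | h
    exacts [Or.inl (congrArg Fin.val (f.injective h)), Or.inr (congrArg Fin.val (f.injective h))]
  have hnc : IsNoncrossing (insert (lo.val, hi.val) (edgeIndexPairs G f)) := by
    refine (isNoncrossing_edgeIndexPairs hcross).insert fun p hp => ?_
    obtain ⟨c, d, -, hcd, rfl⟩ := mem_edgeIndexPairs.1 hp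
    rw [← not_or]
    intro h
    rcases hkey c d d.isLt h with hc | hd
    · have := hend d (Fin.ext hc ▸ hcd)
      omega
    · have := hend c (Fin.ext hd ▸ hcd.symm)
      omega
  have hbound : ∀ p ∈ insert (lo.val, hi.val) (edgeIndexPairs G f),
      0 ≤ p.1 ∧ p.1 < p.2 ∧ p.2 ≤ n - 1 := by
    intro p hp
    rcases Finset.mem_insert.1 hp with rfl | hp
    · exact ⟨Nat.zero_le _, hlohi, Nat.le_sub_one_of_lt hi.isLt⟩
    · obtain ⟨a, b, hab, -, rfl⟩ := mem_edgeIndexPairs.1 hp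
      exact ⟨Nat.zero_le _, hab, Nat.le_sub_one_of_lt b.isLt⟩
  have := hnc.card_le hbound
  rw [Finset.card_insert_of_notMem hnew, card_edgeIndexPairs, hcard] at this
  omega

theorem IsMOP.isEar_of_ndeg_eq_two [Fintype V] (hG : IsMOP G) {v : V} (hv : ndeg G v = 2) :
    IsEar G v := by
  obtain ⟨hn, f, hcyc, hcross, hcard⟩ := hG
  exact isEar_of_ndeg_eq_two_of_noncrossing hn f hcyc hcross hcard hv

end

theorem stmt_6_general {V : Type*} [Fintype V] (G : SimpleGraph V)
    (hmop : IsMOP G) :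
    ({v : V | ndeg G v = 2}.ncard + 1) / 2 ≤ zeroForcingNumber G := by
  obtain ⟨S, hScard, hS⟩ :=
    Nat.sInf_mem (s := {n | ∃ S : Set V, S.ncard = n ∧ IsZeroForcingSet G S})
      ⟨_, Set.univ, rfl, fun v => .init v trivial⟩
  have := hS.ncard_le_two_mul (E := {v | ndeg G v = 2}) fun _ => hmop.isEar_of_ndeg_eq_two
  rw [zeroForcingNumber, ← hScard]
  omega

/-- If `G` is a MOP with at least one separator triangle whose subgraph `G_△` formed by
the separator triangles is connected, then `Z(G) ≥ ⌈n₂/2⌉` where `n₂` is the number of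
vertices of degree 2. -/
theorem stmt_6 {V : Type*} [Fintype V] (G : SimpleGraph V)
    (hmop : IsMOP G)
    (ht : ∃ T : Finset V, IsSeparatorTriangle G T)
    (hcomp : (sepSubgraph G).Connected) :
    ({v : V | ndeg G v = 2}.ncard + 1) / 2 ≤ zeroForcingNumber G :=
  stmt_6_general G hmop
end
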